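/- arXiv:1307.3681 — 2 statements merged into one kernel-verified Lean document; each statement's English description precedes it below -/
import Mathlib

section
/- Let k ≥ 2 and t ≥ k+1 be integers, and define g_{t,k}(x_1, …, x_k) := (x_1+1)^{t−k} + x_2 + ⋯ + x_k, a polynomial in k complex variables with exactly t monomial terms. Then Δ(Amoeba(g_{t,k}), ArchTrop(g_{t,k})) ≥ log(t−k); in particular, for every ε > 0 there exists σ ∈ ArchTrop(g_{t,k}) whose Euclidean distance to every point of Amoeba(g_{t,k}) exceeds log(t−k) − ε. -/
open Pointwise

/-- Evaluation of the Laurent polynomial `f(x) = ∑ i, c i * x^{a i}` at `x ∈ (ℂ∖{0})^n`. -/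
noncomputable def lpoly {n : ℕ} {ι : Type*} [Fintype ι] (c : ι → ℂ) (a : ι → Fin n → ℤ)
    (x : Fin n → ℂ) : ℂ :=
  ∑ i, c i * ∏ j, x j ^ a i j

/-- `Log|x| = (log|x_1|, …, log|x_n|)`. -/
noncomputable def LogAbs {n : ℕ} (x : Fin n → ℂ) : EuclideanSpace ℝ (Fin n) :=
  WithLp.toLp 2 (fun j => Real.log ‖x j‖)

/-- `Amoeba(f) = { Log|x| : x ∈ (ℂ∖{0})^n, f(x) = 0 }`. -/
noncomputable def Amoeba {n : ℕ} {ι : Type*} [Fintype ι] (c : ι → ℂ) (a : ι → Fin n → ℤ) :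
    Set (EuclideanSpace ℝ (Fin n)) :=
  {w | ∃ x : Fin n → ℂ, (∀ j, x j ≠ 0) ∧ lpoly c a x = 0 ∧ w = LogAbs x}

/-- `|c_i| e^{a_i · v}`, the `i`-th tropical term of `f` at `v`. -/
noncomputable def tropTerm {n : ℕ} {ι : Type*} (c : ι → ℂ) (a : ι → Fin n → ℤ)
    (v : EuclideanSpace ℝ (Fin n)) (i : ι) : ℝ :=
  ‖c i‖ * Real.exp (∑ j, (a i j : ℝ) * v j)

/-- `ArchTrop(f)`: the set of `v ∈ ℝ^n` where the maximum of `|c_i| e^{a_i·v}` is attained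
at least twice. -/
noncomputable def ArchTrop {n : ℕ} {ι : Type*} (c : ι → ℂ) (a : ι → Fin n → ℤ) :
    Set (EuclideanSpace ℝ (Fin n)) :=
  {v | ∃ i k : ι, i ≠ k ∧ (∀ l, tropTerm c a v l ≤ tropTerm c a v i) ∧
      tropTerm c a v i = tropTerm c a v k}

/-- Coefficients of `g_{t,k}(x) = (x_1+1)^{t-k} + x_2 + ⋯ + x_k`: binomial coefficients for
the powers of `x_1`, and `1` for each of `x_2, …, x_k`. -/
noncomputable def gCoeff (t k : ℕ) : (Fin (t - k + 1) ⊕ Fin (k - 1)) → ℂ :=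
  Sum.elim (fun i => ((t - k).choose i : ℂ)) (fun _ => 1)

/-- Exponent vectors of `g_{t,k}(x) = (x_1+1)^{t-k} + x_2 + ⋯ + x_k`. -/
def gExp (t k : ℕ) : (Fin (t - k + 1) ⊕ Fin (k - 1)) → Fin k → ℤ :=
  Sum.elim (fun i => fun j => if (j : ℕ) = 0 then ((i : ℕ) : ℤ) else 0)
    (fun i => fun j => if (j : ℕ) = (i : ℕ) + 1 then 1 else 0)

/-!
At `σ = (log m, -N, …, -N)` with `m = t - k`, the tropical terms of `(x₁ + 1)^m` are
`binom(m, i) m^i ≤ m^m`, with equality for `i = m - 1` and `i = m`, while those of `x₂, …, x_k` are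
`e^(-N) ≤ 1`; so `σ ∈ ArchTrop`. If `x` is a zero of `g` with `Log|x|` within `log m` of `σ`, then
every `|x_j|` (`j ≥ 2`) is at most `m e^(-N)`, hence `|x₁ + 1|^m ≤ (k-1) m e^(-N)` is tiny, so
`|x₁| ≤ 1 + δ` and the first coordinates differ by at least `log m - log(1 + δ)`.
Letting `N → ∞` and `δ → 0` gives the bound.
-/

open Finset

theorem Fin.sum_filter_val_pos {M : Type*} [AddCommMonoid M] {k : ℕ} (f : Fin k → M) :
    ∑ i ∈ univ.filter (fun j : Fin k => 0 < (j : ℕ)), f i =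
      ∑ i : Fin (k - 1), f ⟨i + 1, by omega⟩ := by
  symm
  refine sum_bij (fun i _ ↦ ⟨i + 1, by omega⟩) (by simp) (by simp [Fin.ext_iff])
    (fun j hj ↦ ?_) (by simp)
  have hj : 0 < (j : ℕ) := (mem_filter.1 hj).2
  exact ⟨⟨j - 1, by omega⟩, mem_univ _, Fin.ext (Nat.sub_add_cancel hj)⟩

@[to_additive]
theorem Fin.prod_ite_val_eq {M : Type*} [CommMonoid M] {n c : ℕ} (hc : c < n) (f : Fin n → M) :
    ∏ j : Fin n, (if (j : ℕ) = c then f j else 1) = f ⟨c, hc⟩ := by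
  simpa [Fin.ext_iff] using prod_ite_eq' univ ⟨c, hc⟩ f

theorem lpoly_gCoeff_gExp {k : ℕ} (t : ℕ) (hk : 0 < k) (x : Fin k → ℂ) :
    lpoly (gCoeff t k) (gExp t k) x =
      (x ⟨0, hk⟩ + 1) ^ (t - k) + ∑ i ∈ univ.filter (fun j : Fin k => 0 < (j : ℕ)), x i := by
  rw [lpoly, Fintype.sum_sum_type, add_pow, ← Fin.sum_univ_eq_sum_range, Fin.sum_filter_val_pos]
  congr 1 <;> refine sum_congr rfl fun i _ => ?_
  · simp [gCoeff, gExp, apply_ite, Fin.prod_ite_val_eq hk, mul_comm]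
  · simp [gCoeff, gExp, apply_ite, Fin.prod_ite_val_eq (Nat.add_lt_of_lt_sub i.isLt)]

theorem Metric.ofReal_le_hausdorffEDist_of_forall_exists_lt_dist {α : Type*}
    [PseudoMetricSpace α] {s t : Set α} {r : ℝ}
    (h : ∀ ε > 0, ∃ y ∈ t, ∀ x ∈ s, r - ε < dist y x) :
    ENNReal.ofReal r ≤ hausdorffEDist s t := by
  refine le_of_forall_lt_imp_le_of_dense fun c hc ↦ ?_
  have hcr : c.toReal < r := ENNReal.toReal_lt_of_lt_ofReal hc
  obtain ⟨y, hy, hfar⟩ := h (r - c.toReal) (by linarith)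
  calc c = ENNReal.ofReal c.toReal := (ENNReal.ofReal_toReal hc.ne_top).symm
    _ ≤ infEDist y s := le_infEDist.2 fun x hx ↦ by
        rw [edist_dist]
        exact ENNReal.ofReal_le_ofReal (by linarith [hfar x hx])
    _ ≤ hausdorffEDist t s := infEDist_le_hausdorffEDist_of_mem hy
    _ = hausdorffEDist s t := hausdorffEDist_comm

theorem Nat.choose_mul_pow_le_pow (m i : ℕ) : m.choose i * m ^ i ≤ m ^ m := by
  rcases le_or_gt i m with hi | hi
  · calc m.choose i * m ^ i = m.choose (m - i) * m ^ i := by rw [Nat.choose_symm hi]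
      _ ≤ m ^ (m - i) * m ^ i := Nat.mul_le_mul_right _ (Nat.choose_le_pow _ _)
      _ = m ^ m := by rw [← pow_add, Nat.sub_add_cancel hi]
  · simp [Nat.choose_eq_zero_of_lt hi]

noncomputable def farPoint (k m : ℕ) (N : ℝ) : EuclideanSpace ℝ (Fin k) :=
  WithLp.toLp 2 fun j ↦ if (j : ℕ) = 0 then Real.log m else -N

theorem tropTerm_gCoeff_gExp_inl {k t : ℕ} (hk : 0 < k) (hm : 0 < t - k) (N : ℝ)
    (i : Fin (t - k + 1)) :
    tropTerm (gCoeff t k) (gExp t k) (farPoint k (t - k) N) (.inl i) =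
      (t - k).choose i * ((t - k : ℕ) : ℝ) ^ (i : ℕ) := by
  simp only [tropTerm, gCoeff, gExp, farPoint, Sum.elim_inl, PiLp.toLp_apply, Int.cast_ite,
    Int.cast_zero, ite_mul, zero_mul]
  rw [Fin.sum_ite_val_eq hk]
  simp [← Real.log_pow, Real.exp_log (by positivity : (0 : ℝ) < ((t - k : ℕ) : ℝ) ^ (i : ℕ))]

theorem tropTerm_gCoeff_gExp_inr {k t : ℕ} (N : ℝ) (i : Fin (k - 1)) :
    tropTerm (gCoeff t k) (gExp t k) (farPoint k (t - k) N) (.inr i) = Real.exp (-N) := by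
  simp only [tropTerm, gCoeff, gExp, farPoint, Sum.elim_inr, PiLp.toLp_apply, Int.cast_ite,
    Int.cast_zero, ite_mul, zero_mul]
  rw [Fin.sum_ite_val_eq (Nat.add_lt_of_lt_sub i.isLt)]
  simp

theorem farPoint_mem_archTrop {k t : ℕ} (hk : 0 < k) (hm : 0 < t - k) {N : ℝ} (hN : 0 ≤ N) :
    farPoint k (t - k) N ∈ ArchTrop (gCoeff t k) (gExp t k) := by
  set m := t - k
  have hmax : tropTerm (gCoeff t k) (gExp t k) (farPoint k m N) (.inl (Fin.last m)) = m ^ m := by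
    simp [m, tropTerm_gCoeff_gExp_inl hk hm]
  refine ⟨.inl (Fin.last m), .inl ⟨m - 1, by omega⟩, by simp [Fin.ext_iff]; omega, ?_, ?_⟩
  · rintro (i | i) <;> rw [hmax]
    · rw [tropTerm_gCoeff_gExp_inl hk hm]
      exact_mod_cast Nat.choose_mul_pow_le_pow m i
    · rw [tropTerm_gCoeff_gExp_inr]
      calc Real.exp (-N) ≤ 1 := Real.exp_le_one_iff.2 (neg_nonpos.2 hN)
        _ ≤ (m : ℝ) ^ m := one_le_pow₀ (by exact_mod_cast hm)
  · rw [hmax, tropTerm_gCoeff_gExp_inl hk hm]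
    rw [← Nat.choose_symm (by omega), Nat.sub_sub_self hm, Nat.choose_one_right]
    push_cast
    rw [← pow_succ', Nat.sub_add_cancel hm]

theorem norm_add_one_pow_le_of_lpoly_eq_zero {k t : ℕ} (hk : 0 < k) {x : Fin k → ℂ}
    (hx : lpoly (gCoeff t k) (gExp t k) x = 0) {r : ℝ}
    (hr : ∀ j : Fin k, 0 < (j : ℕ) → ‖x j‖ ≤ r) :
    ‖x ⟨0, hk⟩ + 1‖ ^ (t - k) ≤ (k - 1 : ℕ) * r := by
  rw [lpoly_gCoeff_gExp t hk, add_eq_zero_iff_eq_neg] at hx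
  calc ‖x ⟨0, hk⟩ + 1‖ ^ (t - k)
      = ‖∑ i ∈ univ.filter (fun j : Fin k => 0 < (j : ℕ)), x i‖ := by rw [← norm_pow, hx, norm_neg]
    _ ≤ ∑ i ∈ univ.filter (fun j : Fin k => 0 < (j : ℕ)), ‖x i‖ := norm_sum_le _ _
    _ ≤ ∑ _i : Fin (k - 1), r := by
        rw [Fin.sum_filter_val_pos]
        exact sum_le_sum fun i _ ↦ hr _ i.succ_pos
    _ = (k - 1 : ℕ) * r := by simp

theorem log_sub_log_le_dist_farPoint {k t : ℕ} (hk : 0 < k) (hm : 0 < t - k) {N δ : ℝ}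
    (hδ : 0 < δ) (hN : (k - 1 : ℕ) * ((t - k : ℕ) * Real.exp (-N)) ≤ δ ^ (t - k))
    {ρ : EuclideanSpace ℝ (Fin k)} (hρ : ρ ∈ Amoeba (gCoeff t k) (gExp t k)) :
    Real.log (t - k : ℕ) - Real.log (1 + δ) ≤ dist (farPoint k (t - k) N) ρ := by
  obtain ⟨x, hx_ne, hx, rfl⟩ := hρ
  set m := t - k
  have hmR : (0 : ℝ) < m := by exact_mod_cast hm
  have hcoord (j : Fin k) :
      |farPoint k m N j - Real.log ‖x j‖| ≤ dist (farPoint k m N) (LogAbs x) := by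
    simpa [Real.dist_eq, LogAbs] using PiLp.dist_apply_le (farPoint k m N) (LogAbs x) j
  by_cases hsmall : ∀ j : Fin k, 0 < (j : ℕ) → ‖x j‖ ≤ m * Real.exp (-N)
  · set x₀ := x ⟨0, hk⟩
    have hx₀δ : ‖x₀ + 1‖ ≤ δ := le_of_pow_le_pow_left₀ hm.ne' hδ.le
      ((norm_add_one_pow_le_of_lpoly_eq_zero hk hx hsmall).trans hN)
    have hx₀ : ‖x₀‖ ≤ 1 + δ := by
      have := norm_sub_le (x₀ + 1) 1
      simp only [add_sub_cancel_right, norm_one] at this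
      linarith
    have hfar : farPoint k m N ⟨0, hk⟩ = Real.log m := by simp [farPoint]
    calc Real.log m - Real.log (1 + δ) ≤ Real.log m - Real.log ‖x₀‖ := by
          gcongr
          exact norm_pos_iff.2 (hx_ne _)
      _ ≤ |farPoint k m N ⟨0, hk⟩ - Real.log ‖x₀‖| := hfar ▸ le_abs_self _
      _ ≤ _ := hcoord _
  · push Not at hsmall
    obtain ⟨j, hj, hxj⟩ := hsmall
    have hlog : Real.log m - N < Real.log ‖x j‖ := by
      simpa [Real.log_mul hmR.ne', Real.log_exp, sub_eq_add_neg] using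
        Real.log_lt_log (by positivity) hxj
    have hfar : farPoint k m N j = -N := by simp [farPoint, hj.ne']
    calc Real.log m - Real.log (1 + δ) ≤ Real.log m := by
          linarith [Real.log_nonneg (by linarith : (1 : ℝ) ≤ 1 + δ)]
      _ ≤ |farPoint k m N j - Real.log ‖x j‖| := by
          rw [hfar, abs_sub_comm]
          exact (by linarith : Real.log m ≤ Real.log ‖x j‖ - -N).trans (le_abs_self _)
      _ ≤ _ := hcoord _

theorem exists_mem_archTrop_forall_lt_dist {k t : ℕ} (hk : 0 < k) (hm : 0 < t - k) {ε : ℝ}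
    (hε : 0 < ε) : ∃ σ ∈ ArchTrop (gCoeff t k) (gExp t k),
      ∀ ρ ∈ Amoeba (gCoeff t k) (gExp t k), Real.log (t - k : ℕ) - ε < dist σ ρ := by
  set δ := Real.exp (ε / 2) - 1
  have hδ : 0 < δ := by simp [δ, half_pos hε]
  have hsmall : ∀ᶠ N : ℝ in Filter.atTop,
      (k - 1 : ℕ) * ((t - k : ℕ) * Real.exp (-N)) ≤ δ ^ (t - k) :=
    ((Real.tendsto_exp_neg_atTop_nhds_zero.const_mul _).const_mul _).eventually
      (ge_mem_nhds (by simpa using pow_pos hδ _))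
  obtain ⟨N, hN₀, hN⟩ := ((Filter.eventually_ge_atTop 0).and hsmall).exists
  refine ⟨farPoint k (t - k) N, farPoint_mem_archTrop hk hm hN₀, fun ρ hρ ↦ ?_⟩
  have := log_sub_log_le_dist_farPoint hk hm hδ hN hρ
  rw [add_sub_cancel, Real.log_exp] at this
  linarith

/-- For integers `k ≥ 2` and `t ≥ k+1`, the polynomial
`g_{t,k}(x) = (x_1+1)^{t-k} + x_2 + ⋯ + x_k` (which has exactly `t` monomial terms) satisfies
`Δ(Amoeba(g_{t,k}), ArchTrop(g_{t,k})) ≥ log(t-k)`; in particular, for every `ε > 0` there is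
a point of `ArchTrop(g_{t,k})` whose distance to every point of `Amoeba(g_{t,k})` exceeds
`log(t-k) - ε`. -/
theorem stmt5 (k t : ℕ) (hk : 2 ≤ k) (htk : k + 1 ≤ t) :
    (∀ x : Fin k → ℂ,
        lpoly (gCoeff t k) (gExp t k) x =
          (x ⟨0, by omega⟩ + 1) ^ (t - k) +
            ∑ i ∈ Finset.univ.filter (fun j : Fin k => 0 < (j : ℕ)), x i) ∧
    ENNReal.ofReal (Real.log ((t : ℝ) - k)) ≤
      Metric.hausdorffEDist (Amoeba (gCoeff t k) (gExp t k))
        (ArchTrop (gCoeff t k) (gExp t k)) ∧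
    ∀ ε : ℝ, 0 < ε → ∃ σ ∈ ArchTrop (gCoeff t k) (gExp t k),
      ∀ ρ ∈ Amoeba (gCoeff t k) (gExp t k), Real.log ((t : ℝ) - k) - ε < dist σ ρ := by
  have hk₀ : 0 < k := by omega
  have hm : 0 < t - k := by omega
  have hfar := fun ε (hε : 0 < ε) ↦ exists_mem_archTrop_forall_lt_dist (t := t) hk₀ hm hε
  rw [Nat.cast_sub (by omega)] at hfar
  exact ⟨lpoly_gCoeff_gExp t hk₀,
    Metric.ofReal_le_hausdorffEDist_of_forall_exists_lt_dist hfar, hfar⟩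
end

section
/- Let f_1, …, f_m be Laurent polynomials in n complex variables, where f_j has exactly t_j ≥ 2 monomial terms for each j. If ζ ∈ (ℂ∖{0})^n is a common root, i.e., f_1(ζ) = ⋯ = f_m(ζ) = 0, then Log|ζ| ∈ ⋂_{j=1}^m ( ArchTrop(f_j) + B̄(0, log(t_j−1)) ), where B̄(0,r) denotes the closed Euclidean ball of radius r centered at the origin of ℝ^n; i.e., for each j there exists σ_j ∈ ArchTrop(f_j) with |Log|ζ| − σ_j| ≤ log(t_j − 1). -/
open Pointwise

/-!
At a root of `f` the largest term `T_i = |c_i ζ^{a_i}|` is at most the sum of the other `t - 1`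
terms, hence at most `t - 1` times the second largest one, `T_k`. Moving `Log|ζ|` in
the direction `a_k - a_i` by `s / |a_i - a_k| ≤ s` multiplies the ratio of these two terms by
`e^{-s}`, so they are equal at `s = log (T_i / T_k) ≤ log (t - 1)`; by the intermediate value
theorem the term `i`, maximal at `s = 0`, ties with another term at some `s` in between while
still maximal.
-/

open Finset

theorem exists_mem_Icc_isMax_tie {ι : Type*} [Fintype ι] [DecidableEq ι] {f : ι → ℝ → ℝ}
    {a b : ℝ} (hab : a ≤ b) (hf : ∀ l, ContinuousOn (f l) (Set.Icc a b)) {i k : ι}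
    (hki : k ≠ i) (hmax : ∀ l, f l a ≤ f i a) (hb : f i b ≤ f k b) :
    ∃ s ∈ Set.Icc a b, ∃ l ≠ i, (∀ l', f l' s ≤ f i s) ∧ f i s = f l s := by
  have hne : (univ.erase i).Nonempty := ⟨k, mem_erase.2 ⟨hki, mem_univ k⟩⟩
  set g : ℝ → ℝ := fun s => (univ.erase i).sup' hne (f · s) - f i s
  have hg : ContinuousOn g (Set.Icc a b) :=
    (ContinuousOn.finset_sup'_apply hne fun l _ => hf l).sub (hf i)
  have hga : g a ≤ 0 := sub_nonpos.2 (sup'_le _ _ fun l _ => hmax l)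
  have hgb : 0 ≤ g b :=
    sub_nonneg.2 (hb.trans (le_sup' (f · b) (mem_erase.2 ⟨hki, mem_univ k⟩)))
  obtain ⟨s, hs, hgs⟩ := intermediate_value_Icc hab hg ⟨hga, hgb⟩
  have htie : (univ.erase i).sup' hne (f · s) = f i s := sub_eq_zero.1 hgs
  obtain ⟨l, hl, hls⟩ := exists_mem_eq_sup' hne (f · s)
  refine ⟨s, hs, l, (mem_erase.1 hl).1, fun l' => ?_, htie.symm.trans hls⟩
  rcases eq_or_ne l' i with rfl | hl'
  · exact le_rfl
  · exact htie ▸ le_sup' (f · s) (mem_erase.2 ⟨hl', mem_univ l'⟩)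

theorem one_le_norm_intCast_of_ne_zero {ι : Type*} [Fintype ι] {z : ι → ℤ} (hz : z ≠ 0) :
    1 ≤ ‖(WithLp.toLp 2 fun j => (z j : ℝ) : EuclideanSpace ℝ ι)‖ := by
  obtain ⟨j, hj⟩ := Function.ne_iff.1 hz
  calc (1 : ℝ) ≤ |(z j : ℝ)| := by exact_mod_cast Int.one_le_abs hj
    _ ≤ _ := PiLp.norm_apply_le (WithLp.toLp 2 fun j => (z j : ℝ)) j

section TropTerm

variable {n : ℕ} {ι : Type*} (c : ι → ℂ) (a : ι → Fin n → ℤ)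

noncomputable def exponentVec (i : ι) : EuclideanSpace ℝ (Fin n) :=
  WithLp.toLp 2 fun j => (a i j : ℝ)

theorem tropTerm_eq_mul_exp_inner (v : EuclideanSpace ℝ (Fin n)) (i : ι) :
    tropTerm c a v i = ‖c i‖ * Real.exp (inner ℝ (exponentVec a i) v) := by
  simp [tropTerm, exponentVec, PiLp.inner_apply, mul_comm]

theorem tropTerm_add_smul (v u : EuclideanSpace ℝ (Fin n)) (s : ℝ) (i : ι) :
    tropTerm c a (v + s • u) i =
      tropTerm c a v i * Real.exp (s * inner ℝ (exponentVec a i) u) := by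
  rw [tropTerm_eq_mul_exp_inner, tropTerm_eq_mul_exp_inner, inner_add_right, inner_smul_right,
    Real.exp_add, mul_assoc]

theorem tropTerm_pos {i : ι} (hc : c i ≠ 0) (v : EuclideanSpace ℝ (Fin n)) :
    0 < tropTerm c a v i :=
  mul_pos (norm_pos_iff.2 hc) (Real.exp_pos _)

theorem norm_monomial_eq_tropTerm {ζ : Fin n → ℂ} (hζ : ∀ j, ζ j ≠ 0) (i : ι) :
    ‖c i * ∏ j, ζ j ^ a i j‖ = tropTerm c a (LogAbs ζ) i := by
  simp only [tropTerm, LogAbs, norm_mul, norm_prod, norm_zpow, Real.exp_sum]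
  congr 1
  refine prod_congr rfl fun j _ => ?_
  rw [← Real.rpow_intCast, Real.rpow_def_of_pos (norm_pos_iff.2 (hζ j)), mul_comm]

theorem tropTerm_le_sum_erase_of_lpoly_eq_zero [Fintype ι] [DecidableEq ι] {ζ : Fin n → ℂ}
    (hζ : ∀ j, ζ j ≠ 0) (hroot : lpoly c a ζ = 0) (i : ι) :
    tropTerm c a (LogAbs ζ) i ≤ ∑ l ∈ univ.erase i, tropTerm c a (LogAbs ζ) l := by
  have hsplit : c i * ∏ j, ζ j ^ a i j = -∑ l ∈ univ.erase i, c l * ∏ j, ζ j ^ a l j :=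
    eq_neg_of_add_eq_zero_right ((sum_erase_add _ _ (mem_univ i)).trans hroot)
  calc tropTerm c a (LogAbs ζ) i = ‖∑ l ∈ univ.erase i, c l * ∏ j, ζ j ^ a l j‖ := by
        rw [← norm_monomial_eq_tropTerm c a hζ, hsplit, norm_neg]
    _ ≤ ∑ l ∈ univ.erase i, ‖c l * ∏ j, ζ j ^ a l j‖ := norm_sum_le _ _
    _ = _ := sum_congr rfl fun l _ => norm_monomial_eq_tropTerm c a hζ l

end TropTerm

theorem exists_mem_archTrop_dist_le_log_div {n : ℕ} {ι : Type*} [Fintype ι] [DecidableEq ι]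
    {c : ι → ℂ} {a : ι → Fin n → ℤ} {v : EuclideanSpace ℝ (Fin n)} {i k : ι}
    (hak : a k ≠ a i) (hck : c k ≠ 0) (hmax : ∀ l, tropTerm c a v l ≤ tropTerm c a v i) :
    ∃ σ ∈ ArchTrop c a, dist v σ ≤ Real.log (tropTerm c a v i / tropTerm c a v k) := by
  set T := tropTerm c a v
  set d := exponentVec a i - exponentVec a k
  set u : EuclideanSpace ℝ (Fin n) := -(‖d‖ ^ 2)⁻¹ • d
  have hd : 1 ≤ ‖d‖ := by
    have hd_eq : d = WithLp.toLp 2 fun j => ((a i - a k) j : ℝ) := by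
      ext j; simp [d, exponentVec]
    exact hd_eq ▸ one_le_norm_intCast_of_ne_zero (sub_ne_zero.2 hak.symm)
  have hdu : inner ℝ (exponentVec a i) u - inner ℝ (exponentVec a k) u = -1 := by
    rw [← inner_sub_left, inner_smul_right, real_inner_self_eq_norm_sq, neg_mul,
      inv_mul_cancel₀ (pow_ne_zero 2 (zero_lt_one.trans_le hd).ne')]
  have hTk : 0 < T k := tropTerm_pos c a hck v
  set r := Real.log (T i / T k)
  have hr : 0 ≤ r := Real.log_nonneg ((one_le_div hTk).2 (hmax k))
  have hcross : T i * Real.exp (r * inner ℝ (exponentVec a i) u)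
      = T k * Real.exp (r * inner ℝ (exponentVec a k) u) := by
    have hTi : T i = T k * Real.exp r := by
      rw [Real.exp_log (div_pos (hTk.trans_le (hmax k)) hTk), mul_div_cancel₀ _ hTk.ne']
    rw [hTi, mul_assoc, ← Real.exp_add]
    congr 2
    linear_combination r * hdu
  obtain ⟨s, hs, l, hli, hsmax, hstie⟩ :=
    exists_mem_Icc_isMax_tie (f := fun l s => tropTerm c a (v + s • u) l) hr
      (fun l => by simp only [tropTerm_add_smul]; fun_prop) (fun h => hak (congrArg a h))
      (by simpa using hmax) (by simpa only [tropTerm_add_smul] using hcross.le)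
  refine ⟨v + s • u, ⟨i, l, hli.symm, hsmax, hstie⟩, ?_⟩
  have hu : ‖u‖ = ‖d‖⁻¹ := by
    rw [norm_smul, norm_neg, norm_inv, norm_pow, norm_norm, sq, mul_inv, mul_assoc,
      inv_mul_cancel₀ (zero_lt_one.trans_le hd).ne', mul_one]
  calc dist v (v + s • u) = s * ‖d‖⁻¹ := by
        rw [dist_self_add_right, norm_smul, Real.norm_of_nonneg hs.1, hu]
    _ ≤ s := mul_le_of_le_one_right hs.1 (inv_le_one_of_one_le₀ hd)
    _ ≤ _ := hs.2

theorem exists_mem_archTrop_dist_logAbs_le {n : ℕ} {ι : Type*} [Fintype ι]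
    (hcard : 2 ≤ Fintype.card ι) {c : ι → ℂ} {a : ι → Fin n → ℤ}
    (ha : Function.Injective a) (hc : ∀ i, c i ≠ 0) {ζ : Fin n → ℂ} (hζ : ∀ j, ζ j ≠ 0)
    (hroot : lpoly c a ζ = 0) :
    ∃ σ ∈ ArchTrop c a, dist (LogAbs ζ) σ ≤ Real.log ((Fintype.card ι : ℝ) - 1) := by
  classical
  set T := tropTerm c a (LogAbs ζ)
  have : Nonempty ι := Fintype.card_pos_iff.1 (by omega)
  obtain ⟨i, hi⟩ := Finite.exists_max T
  have hne : (univ.erase i).Nonempty := by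
    rw [← card_pos, card_erase_of_mem (mem_univ i), card_univ]; omega
  obtain ⟨k, hk, hkmax⟩ := exists_max_image (univ.erase i) T hne
  have hki : k ≠ i := (mem_erase.1 hk).1
  have hTk : 0 < T k := tropTerm_pos c a (hc k) _
  have hbound : T i ≤ ((Fintype.card ι : ℝ) - 1) * T k :=
    calc T i ≤ ∑ l ∈ univ.erase i, T l :=
          tropTerm_le_sum_erase_of_lpoly_eq_zero c a hζ hroot i
      _ ≤ (univ.erase i).card • T k := sum_le_card_nsmul _ _ _ hkmax
      _ = ((Fintype.card ι : ℝ) - 1) * T k := by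
        rw [card_erase_of_mem (mem_univ i), card_univ, nsmul_eq_mul, Nat.cast_pred (by omega)]
  obtain ⟨σ, hσ, hdist⟩ := exists_mem_archTrop_dist_le_log_div (ha.ne hki) (hc k) hi
  exact ⟨σ, hσ, hdist.trans (Real.log_le_log (div_pos (hTk.trans_le (hi k)) hTk)
    ((div_le_iff₀ hTk).2 hbound))⟩

theorem stmt6_general {n m : ℕ}
    (t : Fin m → ℕ) (ht : ∀ j, 2 ≤ t j)
    (c : (j : Fin m) → Fin (t j) → ℂ) (a : (j : Fin m) → Fin (t j) → Fin n → ℤ)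
    (ha : ∀ j, Function.Injective (a j)) (hc : ∀ j i, c j i ≠ 0)
    (ζ : Fin n → ℂ) (hζ : ∀ j, ζ j ≠ 0) (hroot : ∀ j, lpoly (c j) (a j) ζ = 0) :
    LogAbs ζ ∈ ⋂ j, (ArchTrop (c j) (a j) +
        Metric.closedBall (0 : EuclideanSpace ℝ (Fin n)) (Real.log ((t j : ℝ) - 1))) ∧
    ∀ j, ∃ σ ∈ ArchTrop (c j) (a j), dist (LogAbs ζ) σ ≤ Real.log ((t j : ℝ) - 1) := by
  have hnear (j : Fin m) :
      ∃ σ ∈ ArchTrop (c j) (a j), dist (LogAbs ζ) σ ≤ Real.log ((t j : ℝ) - 1) := by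
    simpa using
      exists_mem_archTrop_dist_logAbs_le (by simpa using ht j) (ha j) (hc j) hζ (hroot j)
  refine ⟨Set.mem_iInter.2 fun j => ?_, hnear⟩
  obtain ⟨σ, hσ, hdist⟩ := hnear j
  refine Set.mem_add.2 ⟨σ, hσ, LogAbs ζ - σ, ?_, add_sub_cancel σ (LogAbs ζ)⟩
  rwa [mem_closedBall_zero_iff, ← dist_eq_norm]

/-- If `ζ ∈ (ℂ∖{0})^n` is a common root of Laurent polynomials `f_1, …, f_m`, where `f_j` has
exactly `t_j ≥ 2` monomial terms, then
`Log|ζ| ∈ ⋂_j (ArchTrop(f_j) + B̄(0, log(t_j - 1)))`; i.e., for each `j` there is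
`σ_j ∈ ArchTrop(f_j)` with `|Log|ζ| - σ_j| ≤ log(t_j - 1)`. -/
theorem stmt6 {n m : ℕ} (hn : 1 ≤ n)
    (t : Fin m → ℕ) (ht : ∀ j, 2 ≤ t j)
    (c : (j : Fin m) → Fin (t j) → ℂ) (a : (j : Fin m) → Fin (t j) → Fin n → ℤ)
    (ha : ∀ j, Function.Injective (a j)) (hc : ∀ j i, c j i ≠ 0)
    (ζ : Fin n → ℂ) (hζ : ∀ j, ζ j ≠ 0) (hroot : ∀ j, lpoly (c j) (a j) ζ = 0) :
    LogAbs ζ ∈ ⋂ j, (ArchTrop (c j) (a j) +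
        Metric.closedBall (0 : EuclideanSpace ℝ (Fin n)) (Real.log ((t j : ℝ) - 1))) ∧
    ∀ j, ∃ σ ∈ ArchTrop (c j) (a j), dist (LogAbs ζ) σ ≤ Real.log ((t j : ℝ) - 1) :=
  stmt6_general t ht c a ha hc ζ hζ hroot
end
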